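/- arXiv:2205.05000 — 2 statements merged into one kernel-verified Lean document; each statement's English description precedes it below -/
import Mathlib

section
/- Define (G₁ p)(X, S) = ∑_{i,j=1}^{n_s} ∑_{α=1}^{n_a} f_{ij}^{(α)}(X, S) p(X, S) with the second-order rate functions f_{ij}^{(α)}(X, S) = δ_i(s_α) ∑_{β ≠ α} δ_j(s_β) c_{ij} d_r(x_α, x_β). Then for all M, N ∈ M_{n_a}: ⟨Φ_M, G₁ Φ_N⟩ = ∑_{i,j=1}^{n_s} ∑_{k,l=1}^{m} c_{ij} b_{kl} N_i^{(k)} N_j^{(l)} ⟨Φ_N, Φ_N⟩ if M = N, and ⟨Φ_M, G₁ Φ_N⟩ = 0 if M ≠ N. -/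
open MeasureTheory Finset Function

namespace ABMFormal

abbrev E (d : ℕ) : Type := EuclideanSpace ℝ (Fin d)
abbrev FS (d n_s n_a : ℕ) : Type := (Fin n_a → E d) → (Fin n_a → Fin n_s) → ℝ

noncomputable def occ {d m n_s n_a : ℕ} (A : Fin m → Set (E d)) (X : Fin n_a → E d)
    (S : Fin n_a → Fin n_s) (i : Fin n_s) (k : Fin m) : ℕ :=
  Set.ncard {α : Fin n_a | X α ∈ A k ∧ S α = i}

noncomputable def Phi {d m n_s n_a : ℕ} (A : Fin m → Set (E d)) (N : Fin n_s → Fin m → ℤ)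
    (X : Fin n_a → E d) (S : Fin n_a → Fin n_s) : ℝ :=
  if ∀ i k, ((occ A X S i k : ℕ) : ℤ) = N i k then 1 else 0

noncomputable def Mset (n_s m n_a : ℕ) : Finset (Fin n_s → Fin m → ℤ) :=
  ((Finset.univ : Finset (Fin n_s → Fin m → Fin (n_a + 1))).image
      fun f i k => ((f i k : ℕ) : ℤ)).filter
    fun N => (∑ i, ∑ k, N i k) = (n_a : ℤ)

def posSet {d : ℕ} (Xdom : Set (E d)) (n_a : ℕ) : Set (Fin n_a → E d) :=
  Set.univ.pi fun _ => Xdom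

noncomputable def ip {d n_s n_a : ℕ} (Xdom : Set (E d)) (f g : FS d n_s n_a) : ℝ :=
  (((volume Xdom).toReal * (n_s : ℝ)) ^ n_a)⁻¹ *
    ∑ S : Fin n_a → Fin n_s, ∫ X in posSet Xdom n_a, f X S * g X S

def one (d n_s n_a : ℕ) : FS d n_s n_a := fun _ _ => 1

def Emat {n_s m : ℕ} (i : Fin n_s) (k : Fin m) : Fin n_s → Fin m → ℤ :=
  fun i' k' => if i' = i ∧ k' = k then 1 else 0

def deltaS {n_s : ℕ} (i s : Fin n_s) : ℝ := if s = i then 1 else 0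

noncomputable def deltaA {d : ℕ} (A : Set (E d)) (x : E d) : ℝ :=
  A.indicator (fun _ => (1 : ℝ)) x

noncomputable def dr {d : ℕ} (r : ℝ) (x y : E d) : ℝ := if dist x y ≤ r then 1 else 0

/-- Transition rates `λ_i^{(kl)} = (∫_{A_l} ∫_{A_k} ℓ_i(x,y) dy dx) / μ(A_k)`. -/
noncomputable def lam {d m n_s : ℕ} (A : Fin m → Set (E d)) (K : Fin n_s → E d → E d → ℝ)
    (i : Fin n_s) (k l : Fin m) : ℝ :=
  (∫ x in A l, ∫ y in A k, K i x y) / (volume (A k)).toReal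

/-- The movement generator `(L p)(X, S) = ∑_α ∫_X ℓ_{s_α}(x_α, y) p(X^{α→y}, S) dy`. -/
noncomputable def Lop {d n_s n_a : ℕ} (Xdom : Set (E d)) (K : Fin n_s → E d → E d → ℝ)
    (p : FS d n_s n_a) : FS d n_s n_a :=
  fun X S => ∑ α, ∫ y in Xdom, K (S α) (X α) y * p (Function.update X α y) S

/-- `γ_{ij}^{(k)} = (∫_{A_k} γ_{ij}(x) dx) / μ(A_k)`. -/
noncomputable def gammaK {d m n_s : ℕ} (A : Fin m → Set (E d)) (γ : Fin n_s → Fin n_s → E d → ℝ)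
    (i j : Fin n_s) (k : Fin m) : ℝ :=
  (∫ x in A k, γ i j x) / (volume (A k)).toReal

/-- First-order adoption rate function `f_{ij}^{(α)}(X,S) = δ_i(s_α) γ_{ij}(x_α)`. -/
noncomputable def fFirst {d n_s n_a : ℕ} (γ : Fin n_s → Fin n_s → E d → ℝ) (i j : Fin n_s)
    (α : Fin n_a) (X : Fin n_a → E d) (S : Fin n_a → Fin n_s) : ℝ :=
  deltaS i (S α) * γ i j (X α)

/-- Outflow part `G₁ p = (∑_{i,j,α} f_{ij}^{(α)}) p` of the first-order adoption generator. -/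
noncomputable def G1First {d n_s n_a : ℕ} (γ : Fin n_s → Fin n_s → E d → ℝ)
    (p : FS d n_s n_a) : FS d n_s n_a :=
  fun X S => (∑ i, ∑ j, ∑ α, fFirst γ i j α X S) * p X S

/-- Inflow part `G₂ p (X,S) = ∑_{i,j,α} f_{ij}^{(α)}(X, S + i e_α − j e_α) p(X, S + i e_α − j e_α)`
of the first-order adoption generator.  Since in coordinatewise integer arithmetic
`δ_i(s_α + i − j) = δ_j(s_α)`, and then `S + i e_α − j e_α = Function.update S α i` lies in
`S^{n_a}`, while all other summands vanish by the extension-by-zero convention, the term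
equals `∑_{i,j,α} δ_j(s_α) γ_{ij}(x_α) p(X, update S α i)`. -/
noncomputable def G2First {d n_s n_a : ℕ} (γ : Fin n_s → Fin n_s → E d → ℝ)
    (p : FS d n_s n_a) : FS d n_s n_a :=
  fun X S => ∑ i, ∑ j, ∑ α, deltaS j (S α) * γ i j (X α) * p X (Function.update S α i)

/-- The first-order adoption generator `G = −G₁ + G₂`. -/
noncomputable def GopFirst {d n_s n_a : ℕ} (γ : Fin n_s → Fin n_s → E d → ℝ)
    (p : FS d n_s n_a) : FS d n_s n_a :=
  fun X S => -(G1First γ p X S) + G2First γ p X S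

/-- Second-order adoption rate function
`f_{ij}^{(α)}(X,S) = δ_i(s_α) ∑_{β ≠ α} δ_j(s_β) c_{ij} d_r(x_α, x_β)`. -/
noncomputable def fSecond {d n_s n_a : ℕ} (c : Fin n_s → Fin n_s → ℝ) (r : ℝ)
    (i j : Fin n_s) (α : Fin n_a) (X : Fin n_a → E d) (S : Fin n_a → Fin n_s) : ℝ :=
  deltaS i (S α) * ∑ β ∈ Finset.univ.erase α, deltaS j (S β) * (c i j * dr r (X α) (X β))

/-- Outflow part `G₁ p = (∑_{i,j,α} f_{ij}^{(α)}) p` of the second-order adoption generator. -/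
noncomputable def G1Second {d n_s n_a : ℕ} (c : Fin n_s → Fin n_s → ℝ) (r : ℝ)
    (p : FS d n_s n_a) : FS d n_s n_a :=
  fun X S => (∑ i, ∑ j, ∑ α, fSecond c r i j α X S) * p X S

/-- Inflow part of the second-order adoption generator, the term
`∑_{i,j,α} f_{ij}^{(α)}(X, S + i e_α − j e_α) p(X, S + i e_α − j e_α)`; as in the
first-order case the only non-vanishing summands are those with `s_α = j`, giving
`∑_{i,j,α} δ_j(s_α) (∑_{β ≠ α} δ_j(s_β) c_{ij} d_r(x_α,x_β)) p(X, update S α i)`. -/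
noncomputable def G2Second {d n_s n_a : ℕ} (c : Fin n_s → Fin n_s → ℝ) (r : ℝ)
    (p : FS d n_s n_a) : FS d n_s n_a :=
  fun X S => ∑ i, ∑ j, ∑ α, deltaS j (S α) *
    (∑ β ∈ Finset.univ.erase α, deltaS j (S β) * (c i j * dr r (X α) (X β))) *
    p X (Function.update S α i)

/-- The second-order adoption generator `G = −G₁ + G₂`. -/
noncomputable def GopSecond {d n_s n_a : ℕ} (c : Fin n_s → Fin n_s → ℝ) (r : ℝ)
    (p : FS d n_s n_a) : FS d n_s n_a :=
  fun X S => -(G1Second c r p X S) + G2Second c r p X S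

/-- `b_{kl} = (∫_{A_k} ∫_{A_l} d_r(x₁,x₂) dx₂ dx₁)/(μ(A_k) μ(A_l))`. -/
noncomputable def bOf {d m : ℕ} (A : Fin m → Set (E d)) (r : ℝ) (k l : Fin m) : ℝ :=
  (∫ x in A k, ∫ y in A l, dr r x y) / ((volume (A k)).toReal * (volume (A l)).toReal)

/-- The normalized ansatz functions `Φ̂_N = Φ_N / ⟨Φ_N, 𝟙⟩`. -/
noncomputable def Phihat {d m n_s n_a : ℕ} (Xdom : Set (E d)) (A : Fin m → Set (E d))
    (N : Fin n_s → Fin m → ℤ) : FS d n_s n_a :=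
  fun X S => Phi A N X S / ip Xdom (Phi (n_a := n_a) A N) (one d n_s n_a)

/-- The Galerkin projection `Q v = ∑_{N ∈ M_{n_a}} (⟨Φ_N, v⟩/⟨Φ_N, 𝟙⟩) Φ_N`. -/
noncomputable def Qproj {d m n_s n_a : ℕ} (Xdom : Set (E d)) (A : Fin m → Set (E d))
    (v : FS d n_s n_a) : FS d n_s n_a :=
  fun X S => ∑ N ∈ Mset n_s m n_a,
    (ip Xdom (Phi (n_a := n_a) A N) v / ip Xdom (Phi (n_a := n_a) A N) (one d n_s n_a)) *
      Phi A N X S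

/-- The matrix representation `Ĥ_{NM} = ⟨Φ_M, H Φ_N⟩ / ⟨Φ_N, 𝟙⟩` of a projected operator. -/
noncomputable def Hhat {d m n_s n_a : ℕ} (Xdom : Set (E d)) (A : Fin m → Set (E d))
    (H : FS d n_s n_a →ₗ[ℝ] FS d n_s n_a) (N M : Fin n_s → Fin m → ℤ) : ℝ :=
  ip Xdom (Phi (n_a := n_a) A M) (H (Phi A N)) / ip Xdom (Phi (n_a := n_a) A N) (one d n_s n_a)

end ABMFormal

/-!
Cut `posSet Xdom n_a` into the cells `∏_α A (κ α)`, `κ : Fin n_a → Fin m`. On a cell `Φ_N` is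
constant, equal to `1` exactly when the occupation numbers of `(κ, S)` are `N`, and by Fubini the
integral of `d_r(x_α, x_β)` over the cell, `α ≠ β`, is its volume times `b_{κ(α) κ(β)}`. Grouping
the ordered pairs `α ≠ β` by status and region turns `∑ c_{s_α s_β} b_{κ(α) κ(β)}` into
`∑ c_ij b_kl N_i^(k) N_j^(l)`; the diagonal pairs this grouping adds contribute nothing since
`c_ii = 0`. For `M ≠ N` the product `Φ_M Φ_N` vanishes identically.
-/

section PiPair

variable {ι X : Type*} [Fintype ι] [DecidableEq ι] [MeasurableSpace X]
  (μ : ι → Measure X) [∀ i, IsFiniteMeasure (μ i)] {a b : ι}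

theorem MeasureTheory.Measure.pi_map_apply_pair (hab : a ≠ b) :
    (Measure.pi μ).map (fun x => (x a, x b))
      = ((∏ i ∈ (univ.erase a).erase b, measureUnivNNReal (μ i)) • μ a).prod (μ b) := by
  refine (Measure.prod_eq fun s t hs ht => ?_).symm
  have hpre : (fun x : ι → X => (x a, x b)) ⁻¹' s ×ˢ t
      = Set.univ.pi fun i => if i = a then s else if i = b then t else Set.univ := by
    ext x
    simp only [Set.mem_preimage, Set.mem_prod, Set.mem_univ_pi]
    constructor
    · rintro ⟨hxa, hxb⟩ i
      split_ifs with hia hib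
      · exact hia ▸ hxa
      · exact hib ▸ hxb
      · trivial
    · intro h
      exact ⟨by simpa using h a, by simpa [hab.symm] using h b⟩
  have hb : b ∈ univ.erase a := mem_erase.mpr ⟨hab.symm, mem_univ b⟩
  rw [Measure.map_apply ((measurable_pi_apply a).prodMk (measurable_pi_apply b)) (hs.prod ht),
    hpre, Measure.pi_pi, ← mul_prod_erase _ _ (mem_univ a), ← mul_prod_erase _ _ hb,
    prod_congr rfl fun i hi => by
      rw [if_neg (ne_of_mem_erase (mem_of_mem_erase hi)), if_neg (ne_of_mem_erase hi)]]
  simp only [↓reduceIte, if_neg hab.symm, Measure.smul_apply, ENNReal.smul_def, smul_eq_mul,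
    ENNReal.ofNNReal_finsetProd, measureUnivNNReal, ENNReal.coe_toNNReal (measure_ne_top _ _)]
  ring

theorem MeasureTheory.integral_pi_apply_pair (hab : a ≠ b) {f : X → X → ℝ}
    (hf : Integrable (uncurry f) ((μ a).prod (μ b))) :
    ∫ x, f (x a) (x b) ∂Measure.pi μ
      = (∏ i ∈ (univ.erase a).erase b, (μ i).real Set.univ) * ∫ y, ∫ z, f y z ∂μ b ∂μ a := by
  have hmap := Measure.pi_map_apply_pair μ hab
  rw [Measure.prod_smul_left] at hmap
  have hφ : Measurable fun x : ι → X => (x a, x b) :=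
    (measurable_pi_apply a).prodMk (measurable_pi_apply b)
  change ∫ x, uncurry f (x a, x b) ∂Measure.pi μ = _
  rw [← integral_map hφ.aemeasurable (hmap ▸ hf.1.smul_measure _), hmap,
    integral_smul_nnreal_measure, integral_prod _ hf]
  simp only [measureUnivNNReal, measureReal_def, NNReal.smul_def, NNReal.coe_prod,
    ENNReal.coe_toNNReal_eq_toReal, smul_eq_mul, uncurry_apply_pair]

end PiPair

section Counting

variable {ι T K R : Type*} [Fintype ι] [Fintype T] [DecidableEq T]
  [Fintype K] [DecidableEq K] [CommSemiring R] (S : ι → T) (κ : ι → K)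

theorem Finset.sum_apply_eq_sum_card_mul (h : T → K → R) :
    ∑ α, h (S α) (κ α) = ∑ i, ∑ k, #{α | κ α = k ∧ S α = i} * h i k := by
  rw [← sum_fiberwise univ S]
  refine sum_congr rfl fun i _ => ?_
  rw [← sum_fiberwise _ κ]
  refine sum_congr rfl fun k _ => ?_
  rw [filter_filter, sum_congr rfl fun α hα => by
    obtain ⟨hSα, hκα⟩ := (mem_filter.mp hα).2; rw [hSα, hκα], sum_const, nsmul_eq_mul]
  simp only [and_comm]

theorem Finset.sum_sum_erase_eq_sum_card_mul_card [DecidableEq ι] (c : T → T → R)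
    (hc : ∀ i, c i i = 0) (b : K → K → R) :
    ∑ α, ∑ β ∈ univ.erase α, c (S α) (S β) * b (κ α) (κ β)
      = ∑ i, ∑ j, ∑ k, ∑ l,
          c i j * b k l * #{α | κ α = k ∧ S α = i} * #{α | κ α = l ∧ S α = j} := by
  calc ∑ α, ∑ β ∈ univ.erase α, c (S α) (S β) * b (κ α) (κ β)
      = ∑ α, ∑ β, c (S α) (S β) * b (κ α) (κ β) :=
        sum_congr rfl fun α _ => sum_erase _ (by rw [hc, zero_mul])
    _ = ∑ β, ∑ α, c (S α) (S β) * b (κ α) (κ β) := sum_comm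
    _ = ∑ β, ∑ i, ∑ k, #{α | κ α = k ∧ S α = i} * (c i (S β) * b k (κ β)) :=
        sum_congr rfl fun β _ => sum_apply_eq_sum_card_mul S κ fun i k => c i (S β) * b k (κ β)
    _ = ∑ i, ∑ k, ∑ β, #{α | κ α = k ∧ S α = i} * (c i (S β) * b k (κ β)) := by
        rw [sum_comm]; exact sum_congr rfl fun i _ => sum_comm
    _ = ∑ i, ∑ k, ∑ j, ∑ l,
          #{α | κ α = k ∧ S α = i} * (#{α | κ α = l ∧ S α = j} * (c i j * b k l)) := by
        simp_rw [← mul_sum]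
        exact sum_congr rfl fun i _ => sum_congr rfl fun k _ => congrArg _ <|
          sum_apply_eq_sum_card_mul S κ fun j l => c i j * b k l
    _ = _ := by
        refine sum_congr rfl fun i _ => ?_
        rw [sum_comm]
        refine sum_congr rfl fun j _ => sum_congr rfl fun k _ => sum_congr rfl fun l _ => by ring

end Counting

namespace ABMFormal

section Cells

variable {d m n_s n_a : ℕ} (A : Fin m → Set (E d))

def cell (κ : Fin n_a → Fin m) : Set (Fin n_a → E d) :=
  Set.univ.pi fun α => A (κ α)

def cellOcc (κ : Fin n_a → Fin m) (S : Fin n_a → Fin n_s) (i : Fin n_s) (k : Fin m) : ℕ :=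
  #{α | κ α = k ∧ S α = i}

variable {A}

theorem eq_of_mem_cell (hAdisj : Pairwise (Disjoint on A)) {κ κ' : Fin n_a → Fin m}
    {X : Fin n_a → E d} (hX : X ∈ cell A κ) (hX' : X ∈ cell A κ') : κ = κ' := by
  by_contra hne
  obtain ⟨α, hα⟩ := Function.ne_iff.mp hne
  exact Set.disjoint_left.mp (hAdisj hα) (hX α trivial) (hX' α trivial)

theorem occ_eq_cellOcc (hAdisj : Pairwise (Disjoint on A)) {κ : Fin n_a → Fin m}
    {X : Fin n_a → E d} (hX : X ∈ cell A κ) (S : Fin n_a → Fin n_s) (i : Fin n_s) (k : Fin m) :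
    occ A X S i k = cellOcc κ S i k := by
  rw [occ, cellOcc, ← Set.ncard_coe_finset, coe_filter]
  congr 1
  ext α
  simp only [mem_univ, true_and, Set.mem_ofPred_eq]
  refine and_congr_left fun _ => ⟨fun hXα => ?_, fun h => h ▸ hX α trivial⟩
  by_contra hne
  exact Set.disjoint_left.mp (hAdisj hne) (hX α trivial) hXα

theorem Phi_eq_of_mem_cell (hAdisj : Pairwise (Disjoint on A)) {κ : Fin n_a → Fin m}
    {X : Fin n_a → E d} (hX : X ∈ cell A κ) (N : Fin n_s → Fin m → ℤ) (S : Fin n_a → Fin n_s) :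
    Phi A N X S = if ∀ i k, (cellOcc κ S i k : ℤ) = N i k then 1 else 0 := by
  simp only [Phi, occ_eq_cellOcc hAdisj hX]

theorem posSet_eq_iUnion_cell {Xdom : Set (E d)} (hAcover : (⋃ k, A k) = Xdom) :
    posSet Xdom n_a = ⋃ κ, cell A κ := by
  ext X
  simp only [posSet, cell, ← hAcover, Set.mem_univ_pi, Set.mem_iUnion]
  exact Classical.skolem

theorem measurableSet_cell (hAmeas : ∀ k, MeasurableSet (A k)) (κ : Fin n_a → Fin m) :
    MeasurableSet (cell A κ) :=
  MeasurableSet.univ_pi fun α => hAmeas (κ α)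

theorem setIntegral_posSet_Phi_mul {Xdom : Set (E d)} (hAmeas : ∀ k, MeasurableSet (A k))
    (hAdisj : Pairwise (Disjoint on A)) (hAcover : (⋃ k, A k) = Xdom)
    (N : Fin n_s → Fin m → ℤ) (S : Fin n_a → Fin n_s) {g : (Fin n_a → E d) → ℝ}
    (hg : ∀ κ, IntegrableOn g (cell A κ)) :
    ∫ X in posSet Xdom n_a, Phi A N X S * g X
      = ∑ κ with ∀ i k, (cellOcc κ S i k : ℤ) = N i k, ∫ X in cell A κ, g X := by
  have hpos := posSet_eq_iUnion_cell (n_a := n_a) hAcover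
  have hposMeas : MeasurableSet (posSet Xdom n_a) :=
    hpos ▸ MeasurableSet.iUnion (measurableSet_cell hAmeas)
  have hpt : Set.EqOn (fun X => Phi A N X S * g X)
      (fun X => ∑ κ with ∀ i k, (cellOcc κ S i k : ℤ) = N i k, (cell A κ).indicator g X)
      (posSet Xdom n_a) := by
    intro X hX
    obtain ⟨κ₀, hκ₀⟩ := Set.mem_iUnion.mp (hpos ▸ hX)
    have hind : ∀ κ, (cell A κ).indicator g X = if κ = κ₀ then g X else 0 := by
      intro κ
      split_ifs with h
      · exact Set.indicator_of_mem (h ▸ hκ₀) g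
      · exact Set.indicator_of_notMem (fun hκ => h (eq_of_mem_cell hAdisj hκ hκ₀)) g
    simp only [hind, sum_ite_eq', mem_filter, mem_univ, true_and, Phi_eq_of_mem_cell hAdisj hκ₀]
    split_ifs <;> simp
  rw [setIntegral_congr_fun hposMeas hpt, integral_finsetSum _ fun κ _ =>
    ((hg κ).integrable_indicator (measurableSet_cell hAmeas κ)).restrict]
  refine sum_congr rfl fun κ _ => ?_
  rw [setIntegral_indicator (measurableSet_cell hAmeas κ),
    Set.inter_eq_right.mpr (hpos ▸ Set.subset_iUnion _ κ)]

theorem measurable_dr (r : ℝ) : Measurable (uncurry (dr (d := d) r)) :=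
  Measurable.ite (measurableSet_le (continuous_fst.dist continuous_snd).measurable
    measurable_const) measurable_const measurable_const

theorem norm_dr_le_one (r : ℝ) (x y : E d) : ‖dr r x y‖ ≤ 1 := by
  unfold dr; split_ifs <;> simp

theorem integrable_dr (r : ℝ) (μ : Measure (E d × E d)) [IsFiniteMeasure μ] :
    Integrable (uncurry (dr (d := d) r)) μ :=
  .of_bound (measurable_dr r).aestronglyMeasurable 1 (ae_of_all _ fun _ => norm_dr_le_one r _ _)

-- `bOf` divides by `μ(A_k) μ(A_l)`; when that product vanishes, so does the double integral.
theorem mul_bOf {k l : Fin m} (hk : volume (A k) ≠ ⊤) (hl : volume (A l) ≠ ⊤) (r : ℝ) :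
    (volume (A k)).toReal * (volume (A l)).toReal * bOf A r k l
      = ∫ x in A k, ∫ y in A l, dr r x y := by
  rcases eq_or_ne ((volume (A k)).toReal * (volume (A l)).toReal) 0 with h | h
  · rw [h, zero_mul, eq_comm]
    rcases mul_eq_zero.mp h with h | h
    · rw [Measure.restrict_eq_zero.mpr ((ENNReal.toReal_eq_zero_iff _).mp h |>.resolve_right hk),
        integral_zero_measure]
    · simp [Measure.restrict_eq_zero.mpr ((ENNReal.toReal_eq_zero_iff _).mp h |>.resolve_right hl)]
  · rw [bOf, mul_div_cancel₀ _ h]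

theorem volume_restrict_cell (κ : Fin n_a → Fin m) :
    volume.restrict (cell A κ) = Measure.pi fun α => volume.restrict (A (κ α)) := by
  rw [cell, volume_pi, Measure.restrict_pi_pi]

theorem isFiniteMeasure_restrict_cell (hfin : ∀ k, volume (A k) ≠ ⊤) (κ : Fin n_a → Fin m) :
    IsFiniteMeasure (volume.restrict (cell A κ)) := by
  have : ∀ k, IsFiniteMeasure (volume.restrict (A k)) := fun k =>
    isFiniteMeasure_restrict.mpr (hfin k)
  rw [volume_restrict_cell]
  infer_instance

theorem integral_cell_dr (hfin : ∀ k, volume (A k) ≠ ⊤) (κ : Fin n_a → Fin m) (r : ℝ)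
    {α β : Fin n_a} (hαβ : α ≠ β) :
    ∫ X in cell A κ, dr r (X α) (X β) = volume.real (cell A κ) * bOf A r (κ α) (κ β) := by
  have : ∀ k, IsFiniteMeasure (volume.restrict (A k)) := fun k =>
    isFiniteMeasure_restrict.mpr (hfin k)
  rw [volume_restrict_cell, integral_pi_apply_pair _ hαβ (integrable_dr r _), measureReal_def,
    cell, volume_pi, Measure.pi_pi, ENNReal.toReal_prod,
    ← mul_prod_erase _ _ (mem_univ α), ← mul_prod_erase _ _ (mem_erase.mpr ⟨hαβ.symm, mem_univ β⟩)]
  simp only [Measure.real, Measure.restrict_apply_univ]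
  rw [← mul_bOf (hfin _) (hfin _)]
  ring

theorem sum_fSecond (c : Fin n_s → Fin n_s → ℝ) (r : ℝ) (X : Fin n_a → E d)
    (S : Fin n_a → Fin n_s) :
    ∑ i, ∑ j, ∑ α, fSecond c r i j α X S
      = ∑ α, ∑ β ∈ univ.erase α, c (S α) (S β) * dr r (X α) (X β) := by
  calc ∑ i, ∑ j, ∑ α, fSecond c r i j α X S
      = ∑ α, ∑ i, ∑ j, fSecond c r i j α X S :=
        (sum_congr rfl fun i _ => sum_comm).trans sum_comm
    _ = _ := sum_congr rfl fun α _ => by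
        simp only [fSecond, deltaS, ite_mul, one_mul, zero_mul, sum_ite_irrel, sum_const_zero,
          sum_ite_eq, mem_univ, ↓reduceIte]
        rw [sum_comm]
        simp only [sum_ite_eq, mem_univ, ↓reduceIte]

theorem integrableOn_cell_dr (hfin : ∀ k, volume (A k) ≠ ⊤) (κ : Fin n_a → Fin m) (r : ℝ)
    (α β : Fin n_a) : IntegrableOn (fun X => dr r (X α) (X β)) (cell A κ) := by
  have := isFiniteMeasure_restrict_cell hfin κ
  have hm : Measurable fun X : Fin n_a → E d => uncurry (dr r) (X α, X β) :=
    (measurable_dr r).comp ((measurable_pi_apply α).prodMk (measurable_pi_apply β))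
  exact Integrable.of_bound hm.aestronglyMeasurable 1 (ae_of_all _ fun _ => norm_dr_le_one r _ _)

theorem integrableOn_cell_sum_fSecond (hfin : ∀ k, volume (A k) ≠ ⊤) (κ : Fin n_a → Fin m)
    (c : Fin n_s → Fin n_s → ℝ) (r : ℝ) (S : Fin n_a → Fin n_s) :
    IntegrableOn (fun X => ∑ i, ∑ j, ∑ α, fSecond c r i j α X S) (cell A κ) := by
  simp_rw [sum_fSecond]
  exact integrable_finsetSum _ fun α _ => integrable_finsetSum _ fun β _ =>
    (integrableOn_cell_dr hfin κ r α β).const_mul _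

theorem integral_cell_sum_fSecond (hfin : ∀ k, volume (A k) ≠ ⊤) {c : Fin n_s → Fin n_s → ℝ}
    (hcdiag : ∀ i, c i i = 0) (r : ℝ) {N : Fin n_s → Fin m → ℤ} {κ : Fin n_a → Fin m}
    {S : Fin n_a → Fin n_s} (hκ : ∀ i k, (cellOcc κ S i k : ℤ) = N i k) :
    ∫ X in cell A κ, ∑ i, ∑ j, ∑ α, fSecond c r i j α X S
      = (∑ i, ∑ j, ∑ k, ∑ l, c i j * bOf A r k l * (N i k : ℝ) * (N j l : ℝ))
          * volume.real (cell A κ) := by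
  have hint := integrableOn_cell_dr hfin κ r
  have hN : ∀ i k, (N i k : ℝ) = cellOcc κ S i k := fun i k => by exact_mod_cast (hκ i k).symm
  simp_rw [sum_fSecond, hN, cellOcc]
  rw [integral_finsetSum _ fun α _ => integrable_finsetSum _ fun β _ => (hint α β).const_mul _,
    ← sum_sum_erase_eq_sum_card_mul_card S κ c hcdiag (bOf A r), sum_mul]
  refine sum_congr rfl fun α _ => ?_
  rw [integral_finsetSum _ fun β _ => (hint α β).const_mul _, sum_mul]
  refine sum_congr rfl fun β hβ => ?_
  rw [integral_const_mul, integral_cell_dr hfin κ r (ne_of_mem_erase hβ).symm]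
  ring

theorem Phi_mul_self (N : Fin n_s → Fin m → ℤ) (X : Fin n_a → E d) (S : Fin n_a → Fin n_s) :
    Phi A N X S * Phi A N X S = Phi A N X S := by
  unfold Phi; split_ifs <;> norm_num

theorem Phi_mul_Phi_of_ne {M N : Fin n_s → Fin m → ℤ} (hMN : M ≠ N) (X : Fin n_a → E d)
    (S : Fin n_a → Fin n_s) : Phi A M X S * Phi A N X S = 0 := by
  unfold Phi
  split_ifs with hM hN
  · exact absurd (funext₂ fun i k => (hM i k).symm.trans (hN i k)) hMN
  all_goals norm_num

theorem setIntegral_Phi_mul_G1Second {Xdom : Set (E d)} (hfin : ∀ k, volume (A k) ≠ ⊤)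
    (hAmeas : ∀ k, MeasurableSet (A k)) (hAdisj : Pairwise (Disjoint on A))
    (hAcover : (⋃ k, A k) = Xdom) {c : Fin n_s → Fin n_s → ℝ} (hcdiag : ∀ i, c i i = 0) (r : ℝ)
    (N : Fin n_s → Fin m → ℤ) (S : Fin n_a → Fin n_s) :
    ∫ X in posSet Xdom n_a, Phi A N X S * G1Second c r (Phi A N) X S
      = (∑ i, ∑ j, ∑ k, ∑ l, c i j * bOf A r k l * (N i k : ℝ) * (N j l : ℝ))
          * ∫ X in posSet Xdom n_a, Phi A N X S * Phi A N X S := by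
  have hG : ∀ X, Phi A N X S * G1Second c r (Phi A N) X S
      = Phi A N X S * ∑ i, ∑ j, ∑ α, fSecond c r i j α X S := fun X => by
    rw [G1Second, mul_left_comm, Phi_mul_self, mul_comm]
  have hΦ : ∀ X, Phi A N X S * Phi A N X S = Phi A N X S * 1 := fun X => by
    rw [Phi_mul_self, mul_one]
  simp_rw [hG, hΦ]
  rw [setIntegral_posSet_Phi_mul hAmeas hAdisj hAcover N S
      (integrableOn_cell_sum_fSecond hfin · c r S),
    setIntegral_posSet_Phi_mul hAmeas hAdisj hAcover N S fun κ => by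
      have := isFiniteMeasure_restrict_cell hfin κ
      exact integrable_const _,
    mul_sum]
  refine sum_congr rfl fun κ hκ => ?_
  rw [integral_cell_sum_fSecond hfin hcdiag r (mem_filter.mp hκ).2, setIntegral_const,
    smul_eq_mul, mul_one]

end Cells

theorem statement13_general (d m n_s n_a : ℕ)
    (Xdom : Set (E d)) (hXcomp : IsCompact Xdom)
    (A : Fin m → Set (E d)) (hAmeas : ∀ k, MeasurableSet (A k))
    (hAdisj : Pairwise (Disjoint on A))
    (hAcover : (⋃ k, A k) = Xdom)
    (r : ℝ) (c : Fin n_s → Fin n_s → ℝ)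
    (hcdiag : ∀ i, c i i = 0)
    (M N : Fin n_s → Fin m → ℤ) :
    (M = N →
      ip Xdom (Phi (n_a := n_a) A M) (G1Second c r (Phi A N))
        = (∑ i : Fin n_s, ∑ j : Fin n_s, ∑ k : Fin m, ∑ l : Fin m,
              c i j * bOf A r k l * (N i k : ℝ) * (N j l : ℝ)) *
            ip Xdom (Phi (n_a := n_a) A N) (Phi A N)) ∧
    (M ≠ N → ip Xdom (Phi (n_a := n_a) A M) (G1Second c r (Phi A N)) = 0) := by
  have hfin : ∀ k, volume (A k) ≠ ⊤ := fun k =>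
    ((measure_mono (hAcover ▸ Set.subset_iUnion A k)).trans_lt hXcomp.measure_lt_top).ne
  refine ⟨?_, fun hMN => ?_⟩
  · rintro rfl
    simp only [ip, setIntegral_Phi_mul_G1Second hfin hAmeas hAdisj hAcover hcdiag r M, ← mul_sum]
    ring
  · have hzero : ∀ (X : Fin n_a → E d) S, Phi A M X S * G1Second c r (Phi A N) X S = 0 :=
      fun X S => by rw [G1Second, mul_left_comm, Phi_mul_Phi_of_ne hMN, mul_zero]
    simp only [ip, hzero, integral_zero, sum_const_zero, mul_zero]

/-- for the outflow part `G₁` of the second-order adoption generator,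
`⟨Φ_M, G₁ Φ_N⟩ = ∑_{i,j} ∑_{k,l} c_{ij} b_{kl} N_i^{(k)} N_j^{(l)} ⟨Φ_N, Φ_N⟩` if
`M = N`, and `⟨Φ_M, G₁ Φ_N⟩ = 0` if `M ≠ N`. -/
theorem statement13 (d m n_s n_a : ℕ) (hns : 1 ≤ n_s) (hna : 1 ≤ n_a)
    (Xdom : Set (E d)) (hXcomp : IsCompact Xdom) (hXpos : 0 < volume Xdom)
    (A : Fin m → Set (E d)) (hAmeas : ∀ k, MeasurableSet (A k))
    (hAdisj : Pairwise (Disjoint on A)) (hApos : ∀ k, 0 < volume (A k))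
    (hAcover : (⋃ k, A k) = Xdom)
    (r : ℝ) (hr : 0 < r) (c : Fin n_s → Fin n_s → ℝ)
    (hc : ∀ i j, 0 ≤ c i j) (hcdiag : ∀ i, c i i = 0)
    (M N : Fin n_s → Fin m → ℤ)
    (hM : M ∈ Mset n_s m n_a) (hN : N ∈ Mset n_s m n_a) :
    (M = N →
      ip Xdom (Phi (n_a := n_a) A M) (G1Second c r (Phi A N))
        = (∑ i : Fin n_s, ∑ j : Fin n_s, ∑ k : Fin m, ∑ l : Fin m,
              c i j * bOf A r k l * (N i k : ℝ) * (N j l : ℝ)) *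
            ip Xdom (Phi (n_a := n_a) A N) (Phi A N)) ∧
    (M ≠ N → ip Xdom (Phi (n_a := n_a) A M) (G1Second c r (Phi A N)) = 0) :=
  statement13_general d m n_s n_a Xdom hXcomp A hAmeas hAdisj hAcover r c hcdiag M N

end ABMFormal
end

section
/- Let M ∈ M_{n_a}, let α ≠ β be agent indices, let S ∈ S^{n_a}, let i, j ∈ S, and let k, l ∈ {1, …, m}. Then δ_i(s_α) δ_j(s_β) ∫_{X^{n_a}} δ_{A_k}(x_α) δ_{A_l}(x_β) d_r(x_α, x_β) Φ_M(X, S) dX = b_{kl} · δ_i(s_α) δ_j(s_β) ∫_{X^{n_a}} δ_{A_k}(x_α) δ_{A_l}(x_β) Φ_M(X, S) dX. -/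
open MeasureTheory Finset Function

/-!
On the event `x_α ∈ A_k, x_β ∈ A_l` the occupation numbers, hence `Φ_M`, do not depend on where
in `A_k` and `A_l` the agents `α` and `β` sit. There the integrand is a function `c (x_α, x_β)`
times a function of the remaining positions, and Fubini on the product measure factors the
integral as `(∫_{A_k} ∫_{A_l} c) · C` with `C` independent of `c`. Taking `c = d_r` and `c = 1`
gives the two sides, whose ratio is `b_{kl}`.
-/

namespace MeasureTheory

theorem integral_prod_indicator_mul_indicator_mul {α β : Type*} [MeasurableSpace α]
    [MeasurableSpace β] (μ : Measure α) (ν : Measure β) [SFinite μ] [SFinite ν]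
    {s : Set α} {t : Set β} (hs : MeasurableSet s) (ht : MeasurableSet t) (h : α → β → ℝ)
    (hh : Integrable (uncurry h) (μ.prod ν)) :
    ∫ z, s.indicator (fun _ => (1 : ℝ)) z.1 * t.indicator (fun _ => (1 : ℝ)) z.2 * h z.1 z.2
        ∂μ.prod ν
      = ∫ x in s, ∫ y in t, h x y ∂ν ∂μ := by
  have hind : (fun z : α × β =>
      s.indicator (fun _ => (1 : ℝ)) z.1 * t.indicator (fun _ => (1 : ℝ)) z.2 * h z.1 z.2)
      = (s ×ˢ t).indicator (uncurry h) := by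
    ext z
    by_cases h₁ : z.1 ∈ s <;> by_cases h₂ : z.2 ∈ t <;> simp [Set.indicator, h₁, h₂, uncurry]
  rw [hind, integral_indicator (hs.prod ht), setIntegral_prod _ hh.integrableOn]
  rfl

variable {E : Type*} [MeasurableSpace E] (ν : Measure E) [SigmaFinite ν]

theorem integral_pi_comp_eval_pair {T : Type*} [Fintype T] {a b : T} (hab : a ≠ b)
    (hT : ∀ t, t = a ∨ t = b) (g : E → E → ℝ) :
    ∫ u : T → E, g (u a) (u b) ∂Measure.pi (fun _ => ν) = ∫ z, g z.1 z.2 ∂ν.prod ν := by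
  let e : Fin 2 ≃ T := Equiv.ofBijective ![a, b] ⟨by
      intro i j hij
      fin_cases i <;> fin_cases j <;> simp_all [hab.symm], by
      intro t
      rcases hT t with rfl | rfl
      exacts [⟨0, rfl⟩, ⟨1, rfl⟩]⟩
  rw [← (measurePreserving_piCongrLeft (fun _ => ν) e).integral_comp',
    ← (measurePreserving_finTwoArrow ν).integral_comp']
  have ha : a = e 0 := rfl
  have hb : b = e 1 := rfl
  simp [ha, hb, MeasurableEquiv.piCongrLeft_apply_apply]

theorem integral_pi_mul_eq_integral_prod_mul_integral {ι : Type*} [Fintype ι] [DecidableEq ι]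
    {α β : ι} (hαβ : α ≠ β) (g : E → E → ℝ) (G : ({γ // γ ≠ α ∧ γ ≠ β} → E) → ℝ) :
    ∫ X : ι → E, g (X α) (X β) * G (fun γ => X γ) ∂Measure.pi (fun _ => ν)
      = (∫ z, g z.1 z.2 ∂ν.prod ν) * ∫ y, G y ∂Measure.pi (fun _ => ν) := by
  have hα : ¬(α ≠ α ∧ α ≠ β) := by simp
  have hβ : ¬(β ≠ α ∧ β ≠ β) := by simp
  calc _ = ∫ z, G z.1 * g (z.2 ⟨α, hα⟩) (z.2 ⟨β, hβ⟩)
        ∂(Measure.pi fun _ => ν).prod (Measure.pi fun _ : {γ // ¬(γ ≠ α ∧ γ ≠ β)} => ν) := by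
        rw [← (measurePreserving_piEquivPiSubtypeProd (fun _ => ν) _).integral_comp']
        exact integral_congr_ae (.of_forall fun X => mul_comm _ _)
    _ = _ := by
      rw [integral_prod_mul G fun u : {γ // ¬(γ ≠ α ∧ γ ≠ β)} → E => g (u ⟨α, hα⟩) (u ⟨β, hβ⟩),
        mul_comm,
        integral_pi_comp_eval_pair ν (by simpa using hαβ)]
      rintro ⟨γ, hγ⟩
      rw [not_and_or, not_not, not_not] at hγ
      rcases hγ with rfl | rfl <;> simp

end MeasureTheory

theorem mem_iff_mem_of_pairwise_disjoint {ι α : Type*} {A : ι → Set α}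
    (hA : Pairwise (Disjoint on A)) {k : ι} {x y : α} (hx : x ∈ A k) (hy : y ∈ A k) (k' : ι) :
    x ∈ A k' ↔ y ∈ A k' := by
  rcases eq_or_ne k' k with rfl | hk
  · exact iff_of_true hx hy
  · exact iff_of_false (Set.disjoint_right.1 (hA hk) hx) (Set.disjoint_right.1 (hA hk) hy)

namespace ABMFormal

variable {d m n_s n_a : ℕ} {A : Fin m → Set (E d)}

theorem occ_congr {X Y : Fin n_a → E d} (hXY : ∀ γ k, X γ ∈ A k ↔ Y γ ∈ A k)
    (S : Fin n_a → Fin n_s) : occ A X S = occ A Y S := by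
  ext i k
  simp only [occ, hXY]

theorem Phi_congr {X Y : Fin n_a → E d} (hXY : ∀ γ k, X γ ∈ A k ↔ Y γ ∈ A k)
    (N : Fin n_s → Fin m → ℤ) (S : Fin n_a → Fin n_s) : Phi A N X S = Phi A N Y S := by
  simp only [Phi, occ_congr hXY S]

theorem exists_integral_posSet_deltaA_mul_Phi {Xdom : Set (E d)}
    (hAmeas : ∀ k, MeasurableSet (A k)) (hAdisj : Pairwise (Disjoint on A)) {k l : Fin m}
    (hk : (A k).Nonempty) (hl : (A l).Nonempty)
    (hkX : A k ⊆ Xdom) (hlX : A l ⊆ Xdom) {α β : Fin n_a} (hαβ : α ≠ β)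
    (M : Fin n_s → Fin m → ℤ) (S : Fin n_a → Fin n_s) :
    ∃ C : ℝ, ∀ c : E d → E d → ℝ,
      Integrable (uncurry c) ((volume.restrict Xdom).prod (volume.restrict Xdom)) →
      ∫ X in posSet Xdom n_a, deltaA (A k) (X α) * deltaA (A l) (X β) * c (X α) (X β) * Phi A M X S
        = (∫ x in A k, ∫ y in A l, c x y) * C := by
  obtain ⟨x₀, hx₀⟩ := hk
  obtain ⟨y₀, hy₀⟩ := hl
  -- `x₀`, `y₀` stand in for the positions of `α` and `β`, which `Φ_M` cannot see on the cell
  let G : ({γ // γ ≠ α ∧ γ ≠ β} → E d) → ℝ := fun Y =>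
    Phi A M (fun γ => if h : γ ≠ α ∧ γ ≠ β then Y ⟨γ, h⟩ else if γ = α then x₀ else y₀) S
  refine ⟨∫ Y, G Y ∂Measure.pi fun _ => volume.restrict Xdom, fun c hc => ?_⟩
  have hcell : ∀ X : Fin n_a → E d,
      deltaA (A k) (X α) * deltaA (A l) (X β) * c (X α) (X β) * Phi A M X S
        = deltaA (A k) (X α) * deltaA (A l) (X β) * c (X α) (X β) * G (fun γ => X γ) := by
    intro X
    by_cases hXk : X α ∈ A k
    · by_cases hXl : X β ∈ A l
      · congr 1
        refine Phi_congr (fun γ k' => ?_) M S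
        by_cases hγ : γ ≠ α ∧ γ ≠ β
        · simp [hγ]
        rcases not_and_or.1 hγ with hγ | hγ <;> rw [not_not] at hγ <;> subst hγ
        · simpa using mem_iff_mem_of_pairwise_disjoint hAdisj hXk hx₀ k'
        · simpa [hαβ.symm] using mem_iff_mem_of_pairwise_disjoint hAdisj hXl hy₀ k'
      · simp [deltaA, hXl]
    · simp [deltaA, hXk]
  rw [posSet, volume_pi, Measure.restrict_pi_pi]
  simp_rw [hcell]
  rw [integral_pi_mul_eq_integral_prod_mul_integral _ hαβ
      (fun x y => deltaA (A k) x * deltaA (A l) y * c x y)]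
  simp only [deltaA]
  rw [integral_prod_indicator_mul_indicator_mul _ _ (hAmeas k) (hAmeas l) c hc,
    Measure.restrict_restrict_of_subset hkX, Measure.restrict_restrict_of_subset hlX]

theorem statement15_general (d m n_s n_a : ℕ)
    (Xdom : Set (E d)) (hXcomp : IsCompact Xdom)
    (A : Fin m → Set (E d)) (hAmeas : ∀ k, MeasurableSet (A k))
    (hAdisj : Pairwise (Disjoint on A)) (hApos : ∀ k, 0 < volume (A k))
    (hAcover : (⋃ k, A k) = Xdom)
    (r : ℝ)
    (M : Fin n_s → Fin m → ℤ)
    (α β : Fin n_a) (hαβ : α ≠ β)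
    (S : Fin n_a → Fin n_s) (i j : Fin n_s) (k l : Fin m) :
    deltaS i (S α) * deltaS j (S β) *
        ∫ X in posSet Xdom n_a,
          deltaA (A k) (X α) * deltaA (A l) (X β) * dr r (X α) (X β) * Phi A M X S
      = bOf A r k l * (deltaS i (S α) * deltaS j (S β) *
          ∫ X in posSet Xdom n_a,
            deltaA (A k) (X α) * deltaA (A l) (X β) * Phi A M X S) := by
  have hsub (k' : Fin m) : A k' ⊆ Xdom := hAcover ▸ Set.subset_iUnion A k'
  have hvol (k' : Fin m) : (volume (A k')).toReal ≠ 0 :=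
    (ENNReal.toReal_pos (hApos k').ne'
      ((measure_mono (hsub k')).trans_lt hXcomp.measure_lt_top).ne).ne'
  have : IsFiniteMeasure (volume.restrict Xdom) :=
    isFiniteMeasure_restrict.2 hXcomp.measure_lt_top.ne
  obtain ⟨C, hC⟩ := exists_integral_posSet_deltaA_mul_Phi hAmeas hAdisj
    (nonempty_of_measure_ne_zero (hApos k).ne') (nonempty_of_measure_ne_zero (hApos l).ne')
    (hsub k) (hsub l) hαβ M S
  have hdr : Integrable (uncurry (dr r)) ((volume.restrict Xdom).prod (volume.restrict Xdom)) :=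
    (integrable_const (1 : ℝ)).indicator
      (measurableSet_le (continuous_fst.dist continuous_snd).measurable measurable_const)
  have hone := hC (fun _ _ => 1) (integrable_const 1)
  simp only [mul_one, setIntegral_const, smul_eq_mul, measureReal_def] at hone
  rw [hC _ hdr, hone, bOf]
  field_simp [hvol k, hvol l]

/-- for `M ∈ M_{n_a}`, distinct agents `α ≠ β`, statuses `i, j` and
subset indices `k, l`:
`δ_i(s_α) δ_j(s_β) ∫_{X^{n_a}} δ_{A_k}(x_α) δ_{A_l}(x_β) d_r(x_α, x_β) Φ_M dX
 = b_{kl} δ_i(s_α) δ_j(s_β) ∫_{X^{n_a}} δ_{A_k}(x_α) δ_{A_l}(x_β) Φ_M dX`. -/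
theorem statement15 (d m n_s n_a : ℕ) (hns : 1 ≤ n_s) (hna : 1 ≤ n_a)
    (Xdom : Set (E d)) (hXcomp : IsCompact Xdom) (hXpos : 0 < volume Xdom)
    (A : Fin m → Set (E d)) (hAmeas : ∀ k, MeasurableSet (A k))
    (hAdisj : Pairwise (Disjoint on A)) (hApos : ∀ k, 0 < volume (A k))
    (hAcover : (⋃ k, A k) = Xdom)
    (r : ℝ) (hr : 0 < r)
    (M : Fin n_s → Fin m → ℤ) (hM : M ∈ Mset n_s m n_a)
    (α β : Fin n_a) (hαβ : α ≠ β)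
    (S : Fin n_a → Fin n_s) (i j : Fin n_s) (k l : Fin m) :
    deltaS i (S α) * deltaS j (S β) *
        ∫ X in posSet Xdom n_a,
          deltaA (A k) (X α) * deltaA (A l) (X β) * dr r (X α) (X β) * Phi A M X S
      = bOf A r k l * (deltaS i (S α) * deltaS j (S β) *
          ∫ X in posSet Xdom n_a,
            deltaA (A k) (X α) * deltaA (A l) (X β) * Phi A M X S) :=
  statement15_general d m n_s n_a Xdom hXcomp A hAmeas hAdisj hApos hAcover r M α β hαβ S i j k l

end ABMFormal
end
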